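/- If a leaf ℓ' violates exactly one decision at node j (ε_{ℓ'}(j)·v j < 0) and satisfies all others on its path, then val(ℓ⋆) − val(ℓ') = |v j|, where ℓ⋆ is the correctly routed leaf. -/
import Mathlib


noncomputable def ReLU (x : ℝ) : ℝ := max x 0

lemma relu_abs (x : ℝ) : ReLU x + ReLU (-x) = |x| := by
  unfold ReLU
  rcases le_total x 0 with h | h
  · rw [max_eq_right h, max_eq_left (by linarith), abs_of_nonpos h]; ring
  · rw [max_eq_left h, max_eq_right (by linarith), abs_of_nonneg h]; ring

lemma relu_pos_sign {e x : ℝ} (he : e = 1 ∨ e = -1) (h : 0 < e * x) :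
    ReLU (e * x) = |x| := by
  unfold ReLU
  rw [max_eq_left h.le]
  rcases he with rfl | rfl
  · rw [one_mul] at h ⊢; exact (abs_of_pos h).symm
  · have : 0 < -x := by linarith [h]
    rw [abs_of_neg (by linarith : x < 0)]; ring

open Finset in
lemma val_eq (k : ℕ) (v : Fin k → ℝ) (S : Finset (Fin k)) (e : Fin k → ℝ)
    (he : ∀ i, e i = 1 ∨ e i = -1) (hpos : ∀ i ∈ S, 0 < e i * v i) :
    (∑ i ∈ Sᶜ, (ReLU (v i) + ReLU (-v i))) + ∑ i ∈ S, ReLU (e i * v i)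
      = ∑ i, |v i| := by
  rw [Finset.sum_congr rfl (fun i _ => relu_abs (v i)),
      Finset.sum_congr rfl (fun i hi => relu_pos_sign (he i) (hpos i hi)),
      Finset.sum_compl_add_sum]

open Finset in
/-- If leaf `ℓ'` violates exactly one decision, at node `j`, and satisfies all
others on its path, then `val ℓ⋆ - val ℓ' = |v j|` for the correctly routed
leaf `ℓ⋆`. -/
theorem one_violation_gap (k : ℕ) (L : Type) [Fintype L]
    (v : Fin k → ℝ) (hv : ∀ i, v i ≠ 0)
    (path : L → Finset (Fin k)) (ε : L → Fin k → ℝ)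
    (hε : ∀ ℓ i, ε ℓ i = 1 ∨ ε ℓ i = -1)
    (val : L → ℝ)
    (hval : ∀ ℓ, val ℓ = (∑ i ∈ (path ℓ)ᶜ, (ReLU (v i) + ReLU (-v i)))
      + ∑ i ∈ path ℓ, ReLU (ε ℓ i * v i))
    (ℓs : L) (hstar : ∀ i ∈ path ℓs, 0 < ε ℓs i * v i)
    (ℓ' : L) (j : Fin k) (hj : j ∈ path ℓ') (hviol : ε ℓ' j * v j < 0)
    (hrest : ∀ i ∈ path ℓ', i ≠ j → 0 < ε ℓ' i * v i) :
    val ℓs - val ℓ' = |v j| := by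
  have h1 : val ℓs = ∑ i, |v i| := by
    rw [hval]; exact val_eq k v _ _ (hε ℓs) hstar
  have h2 : val ℓ' = (∑ i, |v i|) - |v j| := by
    rw [hval]
    have hsplit : ∑ i ∈ path ℓ', ReLU (ε ℓ' i * v i)
        = ReLU (ε ℓ' j * v j) + ∑ i ∈ (path ℓ').erase j, ReLU (ε ℓ' i * v i) :=
      (Finset.add_sum_erase _ _ hj).symm
    have hz : ReLU (ε ℓ' j * v j) = 0 := by
      unfold ReLU; exact max_eq_right hviol.le
    rw [hsplit, hz, zero_add]
    have herase : ∑ i ∈ (path ℓ').erase j, ReLU (ε ℓ' i * v i)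
        = ∑ i ∈ (path ℓ').erase j, |v i| := by
      refine Finset.sum_congr rfl fun i hi => ?_
      exact relu_pos_sign (hε ℓ' i) (hrest i (Finset.mem_of_mem_erase hi)
        (Finset.ne_of_mem_erase hi))
    rw [herase]
    have hcompl : ∑ i ∈ (path ℓ')ᶜ, (ReLU (v i) + ReLU (-v i))
        = ∑ i ∈ (path ℓ')ᶜ, |v i| :=
      Finset.sum_congr rfl fun i _ => relu_abs (v i)
    rw [hcompl]
    have : (∑ i ∈ (path ℓ')ᶜ, |v i|) + ∑ i ∈ path ℓ', |v i| = ∑ i, |v i| :=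
      Finset.sum_compl_add_sum _ _
    have hpath : ∑ i ∈ path ℓ', |v i| = |v j| + ∑ i ∈ (path ℓ').erase j, |v i| :=
      (Finset.add_sum_erase _ _ hj).symm
    linarith
  rw [h1, h2]; ring
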